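/- Let ε ∈ (0,1) and suppose inf_{‖y‖₁=1} μ(y) ≥ (1−ε)^{−1}. Then liminf_{‖x‖₁→∞} ‖x‖₁^{−1} · log ℙ(T(0,x) ≤ (1−ε)μ(x)) ≥ −log(2d). -/

import Mathlib

open MeasureTheory ProbabilityTheory Filter
open scoped ENNReal ProbabilityTheory

noncomputable section

/-- `ℤ^d`. -/
abbrev Zd (d : ℕ) := Fin d → ℤ

/-- The `ℓ¹`-norm on `ℤ^d`. -/
def norm1 {d : ℕ} (x : Zd d) : ℝ := ∑ i, |(x i : ℝ)|

/-- The `ℓ¹`-norm on `ℝ^d`. -/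
def norm1R {d : ℕ} (x : Fin d → ℝ) : ℝ := ∑ i, |x i|

/-- Canonical embedding of `ℤ^d` into `ℝ^d`. -/
def toR {d : ℕ} (x : Zd d) : Fin d → ℝ := fun i => (x i : ℝ)

/-- Given a frozen environment (`ωe z` = number of frogs initially at `z`,
`Se z ℓ k` = position at time `k` of the `ℓ`-th frog started at `z`), the passage time
`τ(x,y)`: the first time at which one of the frogs initially at `x` hits `y`
(`∞` if there is no such time, in particular if `ωe x = 0`). -/
def tauE {d : ℕ} (ωe : Zd d → ℕ) (Se : Zd d → ℕ → ℕ → Zd d) (x y : Zd d) : ℝ≥0∞ :=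
  sInf {r : ℝ≥0∞ | ∃ k : ℕ, (∃ ℓ : ℕ, 1 ≤ ℓ ∧ ℓ ≤ ωe x ∧ Se x ℓ k = y) ∧ r = k}

/-- The first passage time `T(x,y)` of the frog model, for a frozen environment. -/
def TE {d : ℕ} (ωe : Zd d → ℕ) (Se : Zd d → ℕ → ℕ → Zd d) (x y : Zd d) : ℝ≥0∞ :=
  sInf {r : ℝ≥0∞ | ∃ m : ℕ, 1 ≤ m ∧ ∃ c : ℕ → Zd d, c 0 = x ∧ c m = y ∧
    r = ∑ i ∈ Finset.range m, tauE ωe Se (c i) (c (i + 1))}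

variable {d : ℕ} {Ω : Type*}

/-- The first passage time `T(x,y)` as a random variable. -/
def TT (ω : Zd d → Ω → ℕ) (S : Zd d → ℕ → ℕ → Ω → Zd d) (x y : Zd d) (a : Ω) : ℝ≥0∞ :=
  TE (fun z => ω z a) (fun z ℓ k => S z ℓ k a) x y

/-- Value spaces for the joint family consisting of the initial configuration `ω`
(indexed by sites) and the increments of the random walks (indexed by site, label, time). -/
def MVal (d : ℕ) : Zd d ⊕ (Zd d × ℕ × ℕ) → Type
  | .inl _ => ℕ
  | .inr _ => Zd d

instance (d : ℕ) (i : Zd d ⊕ (Zd d × ℕ × ℕ)) : MeasurableSpace (MVal d i) := by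
  cases i <;> (unfold MVal; infer_instance)

/-- The joint family consisting of the variables `ω x` and of the increments
`S_{k+1}(x,ℓ) - S_k(x,ℓ)` of the random walks. -/
def mfam (ω : Zd d → Ω → ℕ) (S : Zd d → ℕ → ℕ → Ω → Zd d) :
    ∀ i : Zd d ⊕ (Zd d × ℕ × ℕ), Ω → MVal d i
  | .inl x => fun a => ω x a
  | .inr q => fun a => S q.1 q.2.1 (q.2.2 + 1) a - S q.1 q.2.1 q.2.2 a

/-- The frog model on `ℤ^d`: `ω` is an i.i.d. family (not concentrated at `0`) giving the
initial configuration of frogs, and the `S (x,ℓ)` are simple random walks started at `x`,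
the walks and the initial configuration being all jointly independent. -/
def IsFrogModel (d : ℕ) {Ω : Type*} [MeasurableSpace Ω] (P : Measure Ω)
    (ω : Zd d → Ω → ℕ) (S : Zd d → ℕ → ℕ → Ω → Zd d) : Prop :=
  IsProbabilityMeasure P ∧
  (∀ x, Measurable (ω x)) ∧
  (∀ x ℓ k, Measurable (S x ℓ k)) ∧
  -- the walks start at their base point
  (∀ x ℓ a, S x ℓ 0 a = x) ∧
  -- the `ω x` are identically distributed
  (∀ x, IdentDistrib (ω x) (ω 0) P P) ∧
  -- each step of each walk is uniformly distributed on the `2d` unit vectors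
  (∀ (x : Zd d) (ℓ k : ℕ) (ξ : Zd d), norm1 ξ = 1 →
    P {a | S x ℓ (k + 1) a - S x ℓ k a = ξ} = 1 / (2 * d)) ∧
  -- joint independence of the initial configuration and of all steps of all walks
  iIndepFun (mfam ω S) P ∧
  -- the law of `ω 0` is not concentrated at `0`
  P {a | 1 ≤ ω 0 a} ≠ 0

/-- `μ` is the time constant: a norm on `ℝ^d` such that, almost surely on `{ω(0) ≥ 1}`,
`(T(0,x) - μ(x))/‖x‖₁ → 0` as `‖x‖₁ → ∞`. -/
def IsTimeConstant {d : ℕ} {Ω : Type*} [MeasurableSpace Ω] (P : Measure Ω)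
    (ω : Zd d → Ω → ℕ) (S : Zd d → ℕ → ℕ → Ω → Zd d) (μ : (Fin d → ℝ) → ℝ) : Prop :=
  (∀ x y, μ (x + y) ≤ μ x + μ y) ∧
  (∀ (c : ℝ) (x), μ (c • x) = |c| * μ x) ∧
  (∀ x, μ x = 0 → x = 0) ∧
  ∀ᵐ a ∂P, 1 ≤ ω 0 a →
    Tendsto (fun x : Zd d => ((TT ω S 0 x a).toReal - μ (toR x)) / norm1 x)
      (comap norm1 atTop) (nhds 0)

/-! On the event that the origin carries a frog whose first walk follows a fixed `ℓ¹`-geodesic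
from `0` to `x` step by step, `T(0,x) ≤ ‖x‖₁`; by independence this event has probability
`ℙ(ω(0) ≥ 1) (2d)^{-‖x‖₁}`. Homogeneity gives `μ ≥ (1-ε)⁻¹ ‖·‖₁`, so `‖x‖₁ ≤ (1-ε) μ(x)` and the
event lies inside `{T(0,x) ≤ (1-ε) μ(x)}`. -/

theorem norm1_single (i : Fin d) (s : ℤ) : norm1 (Pi.single i s : Zd d) = |(s : ℝ)| := by
  rw [norm1, Finset.sum_eq_single i (fun j _ hj => by simp [hj]) (by simp)]
  simp

theorem norm1_eq_sum_natAbs (x : Zd d) : norm1 x = ((∑ i, (x i).natAbs : ℕ) : ℝ) := by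
  simp [norm1, Nat.cast_natAbs]

theorem exists_list_unit_steps_sum_eq (x : Zd d) :
    ∃ L : List (Zd d), L.length = ∑ i, (x i).natAbs ∧ (∀ e ∈ L, norm1 e = 1) ∧ L.sum = x := by
  refine ⟨(List.finRange d).flatMap
    (fun i => List.replicate (x i).natAbs (Pi.single i (x i).sign)), ?_, ?_, ?_⟩
  · simp [List.length_flatMap, Fin.sum_univ_def]
  · simp only [List.mem_flatMap, List.mem_replicate]
    rintro _ ⟨i, -, hi, rfl⟩
    rw [norm1_single, ← Int.cast_abs, Int.abs_sign_of_ne_zero (Int.natAbs_ne_zero.mp hi),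
      Int.cast_one]
  · simp only [List.flatMap, List.sum_flatten, List.map_map, Function.comp_def,
      List.sum_replicate, ← Pi.single_smul, nsmul_eq_mul, mul_comm _ (Int.sign _),
      Int.sign_mul_natAbs, ← Fin.sum_univ_def, Finset.univ_sum_single]

theorem exists_unit_steps_sum_eq (x : Zd d) :
    ∃ stp : ℕ → Zd d, (∀ k < ∑ i, (x i).natAbs, norm1 (stp k) = 1) ∧
      ∑ k ∈ Finset.range (∑ i, (x i).natAbs), stp k = x := by
  obtain ⟨L, hlen, hunit, hsum⟩ := exists_list_unit_steps_sum_eq x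
  refine ⟨fun k => L.getD k 0, fun k hk => ?_, ?_⟩
  · rw [← hlen] at hk
    simp only [List.getD_eq_getElem L 0 hk]
    exact hunit _ (List.getElem_mem hk)
  · rw [← hlen, Finset.sum_range, ← hsum, ← Fin.sum_univ_getElem]
    exact Finset.sum_congr rfl fun k _ => List.getD_eq_getElem L 0 k.2

section PassageTime

variable {ωe : Zd d → ℕ} {Se : Zd d → ℕ → ℕ → Zd d}

theorem tauE_le_of_hit {x y : Zd d} {ℓ k : ℕ} (hℓ : 1 ≤ ℓ) (hℓω : ℓ ≤ ωe x)
    (hk : Se x ℓ k = y) : tauE ωe Se x y ≤ k :=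
  sInf_le ⟨k, ⟨ℓ, hℓ, hℓω, hk⟩, rfl⟩

theorem TE_le_tauE (x y : Zd d) : TE ωe Se x y ≤ tauE ωe Se x y :=
  sInf_le ⟨1, le_rfl, fun i => if i = 0 then x else y, rfl, rfl, by simp⟩

theorem TE_le_of_steps {x : Zd d} {ℓ n : ℕ} {stp : ℕ → Zd d} (hℓ : 1 ≤ ℓ) (hℓω : ℓ ≤ ωe x)
    (h0 : Se x ℓ 0 = x) (hstp : ∀ k < n, Se x ℓ (k + 1) - Se x ℓ k = stp k) :
    TE ωe Se x (x + ∑ k ∈ Finset.range n, stp k) ≤ n := by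
  have hpos : Se x ℓ n = x + ∑ k ∈ Finset.range n, stp k := by
    rw [← Finset.sum_congr rfl fun k hk => hstp k (Finset.mem_range.mp hk),
      Finset.sum_range_sub, h0, add_sub_cancel]
  exact (TE_le_tauE _ _).trans (tauE_le_of_hit hℓ hℓω hpos)

end PassageTime

section TimeConstant

variable {μ : (Fin d → ℝ) → ℝ}

theorem mul_norm1R_le_of_le_sInf (hsub : ∀ x y, μ (x + y) ≤ μ x + μ y)
    (hhom : ∀ (c : ℝ) (x), μ (c • x) = |c| * μ x) {c : ℝ}
    (hc : c ≤ sInf {r : ℝ | ∃ y : Fin d → ℝ, norm1R y = 1 ∧ r = μ y}) (v : Fin d → ℝ) :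
    c * norm1R v ≤ μ v := by
  let p : Seminorm ℝ (Fin d → ℝ) := Seminorm.of μ hsub hhom
  have hv : 0 ≤ norm1R v := Finset.sum_nonneg fun i _ => abs_nonneg (v i)
  rcases hv.eq_or_lt with hv0 | hvpos
  · rw [← hv0, mul_zero]
    exact apply_nonneg p v
  have hunit : norm1R ((norm1R v)⁻¹ • v) = 1 := by
    change ∑ i, |(norm1R v)⁻¹ * v i| = 1
    simp only [abs_mul, abs_inv, abs_of_pos hvpos, ← Finset.mul_sum]
    exact inv_mul_cancel₀ hvpos.ne'
  have hbdd : BddBelow {r : ℝ | ∃ y : Fin d → ℝ, norm1R y = 1 ∧ r = μ y} :=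
    ⟨0, by rintro _ ⟨y, -, rfl⟩; exact apply_nonneg p y⟩
  calc c * norm1R v ≤ μ ((norm1R v)⁻¹ • v) * norm1R v := by
        gcongr
        exact hc.trans (csInf_le hbdd ⟨_, hunit, rfl⟩)
    _ = μ v := by rw [hhom, abs_of_pos (inv_pos.mpr hvpos), mul_comm, ← mul_assoc,
        mul_inv_cancel₀ hvpos.ne', one_mul]

theorem natAbs_sum_le_mul_of_inv_le_sInf (hsub : ∀ x y, μ (x + y) ≤ μ x + μ y)
    (hhom : ∀ (c : ℝ) (x), μ (c • x) = |c| * μ x) {c : ℝ} (hc : 0 < c)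
    (hinf : c⁻¹ ≤ sInf {r : ℝ | ∃ y : Fin d → ℝ, norm1R y = 1 ∧ r = μ y}) (x : Zd d) :
    ((∑ i, (x i).natAbs : ℕ) : ℝ) ≤ c * μ (toR x) := by
  have h := mul_norm1R_le_of_le_sInf hsub hhom hinf (toR x)
  rw [show norm1R (toR x) = norm1 x from rfl, norm1_eq_sum_natAbs, inv_mul_le_iff₀ hc] at h
  exact h

end TimeConstant

section Independence

variable [MeasurableSpace Ω] {P : Measure Ω} {ω : Zd d → Ω → ℕ}
  {S : Zd d → ℕ → ℕ → Ω → Zd d}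

theorem measure_occupied_inter_steps (hindep : iIndepFun (mfam ω S) P) (x : Zd d) (ℓ n : ℕ)
    (stp : ℕ → Zd d) :
    P ({a | 1 ≤ ω x a} ∩ {a | ∀ k < n, S x ℓ (k + 1) a - S x ℓ k a = stp k}) =
      P {a | 1 ≤ ω x a} *
        ∏ k ∈ Finset.range n, P {a | S x ℓ (k + 1) a - S x ℓ k a = stp k} := by
  classical
  let sets : ∀ i, Set (MVal d i)
    | .inl _ => {m : ℕ | 1 ≤ m}
    | .inr q => {stp q.2.2}
  have hsets : ∀ i, MeasurableSet (sets i)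
    | .inl _ => MeasurableSpace.measurableSet_top
    | .inr _ => measurableSet_singleton (α := Zd d) _
  have hinl : (Sum.inl x : Zd d ⊕ (Zd d × ℕ × ℕ)) ∉
      (Finset.range n).image fun k => Sum.inr (x, ℓ, k) := by simp
  have h := hindep.measure_inter_preimage_eq_mul
    (insert (Sum.inl x) ((Finset.range n).image fun k => Sum.inr (x, ℓ, k)))
    (sets := sets) (fun i _ => hsets i)
  rw [Finset.prod_insert hinl, Finset.prod_image (fun _ _ _ _ h => by simpa using h)] at h
  refine Eq.trans (congrArg P ?_) h
  ext a
  simp only [Finset.mem_insert, Finset.mem_image, Finset.mem_range, Set.mem_iInter,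
    forall_eq_or_imp, forall_exists_index, and_imp, forall_apply_eq_imp_iff₂]
  rfl

theorem pow_le_cond_of_steps_subset [IsFiniteMeasure P] {x : Zd d} {ℓ n : ℕ}
    {stp : ℕ → Zd d} {p : ℝ≥0∞} (hωx : Measurable (ω x)) (hindep : iIndepFun (mfam ω S) P)
    (hstep : ∀ k < n, P {a | S x ℓ (k + 1) a - S x ℓ k a = stp k} = p)
    (hne : P {a | 1 ≤ ω x a} ≠ 0) {E : Set Ω}
    (hE : {a | 1 ≤ ω x a} ∩ {a | ∀ k < n, S x ℓ (k + 1) a - S x ℓ k a = stp k} ⊆ E) :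
    p ^ n ≤ P[|{a | 1 ≤ ω x a}] E := by
  rw [cond_apply (measurableSet_le measurable_const hωx)]
  calc p ^ n = (P {a | 1 ≤ ω x a})⁻¹ * (P {a | 1 ≤ ω x a} * p ^ n) :=
        (ENNReal.inv_mul_cancel_left hne (measure_ne_top _ _)).symm
    _ = (P {a | 1 ≤ ω x a})⁻¹ *
          P ({a | 1 ≤ ω x a} ∩ {a | ∀ k < n, S x ℓ (k + 1) a - S x ℓ k a = stp k}) := by
        rw [measure_occupied_inter_steps hindep,
          Finset.prod_congr rfl fun k hk => hstep k (Finset.mem_range.mp hk),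
          Finset.prod_const, Finset.card_range]
    _ ≤ (P {a | 1 ≤ ω x a})⁻¹ * P ({a | 1 ≤ ω x a} ∩ E) :=
        mul_le_mul_right (measure_mono (Set.subset_inter Set.inter_subset_left hE)) _

end Independence

theorem neg_log_le_inv_mul_log_of_inv_pow_le {b n : ℕ} (hb : 0 < b) (hn : n ≠ 0) {q : ℝ≥0∞}
    (hq : (b : ℝ≥0∞)⁻¹ ^ n ≤ q) :
    ((-Real.log b : ℝ) : EReal) ≤ (((n : ℝ)⁻¹ : ℝ) : EReal) * ENNReal.log q := by
  have hlog : ENNReal.log ((b : ℝ≥0∞)⁻¹ ^ n) = ((n * -Real.log b : ℝ) : EReal) := by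
    rw [ENNReal.log_pow, ENNReal.log_inv, ENNReal.log_pos_real' (by simpa using hb)]
    simp
  calc ((-Real.log b : ℝ) : EReal)
      = (((n : ℝ)⁻¹ : ℝ) : EReal) * ((n * -Real.log b : ℝ) : EReal) := by
        rw [← EReal.coe_mul, inv_mul_cancel_left₀ (by exact_mod_cast hn)]
    _ ≤ (((n : ℝ)⁻¹ : ℝ) : EReal) * ENNReal.log q := by
        rw [← hlog]
        exact mul_le_mul_of_nonneg_left (ENNReal.log_monotone hq)
          (EReal.coe_nonneg.mpr (by positivity))

theorem neg_log_le_liminf_inv_norm1_mul_log {p : Zd d → ℝ≥0∞} {b : ℕ} (hb : 0 < b)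
    (hp : ∀ x, (b : ℝ≥0∞)⁻¹ ^ (∑ i, (x i).natAbs) ≤ p x) :
    ((-Real.log b : ℝ) : EReal) ≤
      liminf (fun x : Zd d => (((norm1 x)⁻¹ : ℝ) : EReal) * ENNReal.log (p x))
        (comap norm1 atTop) := by
  refine le_liminf_of_le isCobounded_ge_of_top ?_
  filter_upwards [(eventually_gt_atTop 0).comap norm1] with x hx
  rw [norm1_eq_sum_natAbs] at hx ⊢
  exact neg_log_le_inv_mul_log_of_inv_pow_le hb (by exact_mod_cast hx.ne') (hp x)

theorem frog_left_tail_lower_bound_general (d : ℕ) (hd : 2 ≤ d)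
    {Ω : Type*} [MeasurableSpace Ω] (P : Measure Ω)
    (ω : Zd d → Ω → ℕ) (S : Zd d → ℕ → ℕ → Ω → Zd d)
    (hfrog : IsFrogModel d P ω S)
    (μ : (Fin d → ℝ) → ℝ) (hμ : IsTimeConstant P ω S μ)
    (ε : ℝ) (hε1 : ε < 1)
    (hinf : (1 - ε)⁻¹ ≤ sInf {r : ℝ | ∃ y : Fin d → ℝ, norm1R y = 1 ∧ r = μ y}) :
    ((-Real.log (2 * d) : ℝ) : EReal) ≤
      liminf
        (fun x : Zd d =>
          (((norm1 x)⁻¹ : ℝ) : EReal) *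
            ENNReal.log
              ((P[|{a | 1 ≤ ω 0 a}])
                {a | TT ω S 0 x a ≤ ENNReal.ofReal ((1 - ε) * μ (toR x))}))
        (comap norm1 atTop) := by
  obtain ⟨hP, hωm, -, hS0, -, hstep, hindep, hne⟩ := hfrog
  obtain ⟨hsub, hhom, -, -⟩ := hμ
  have hprob : ∀ x : Zd d, ((2 * d : ℕ) : ℝ≥0∞)⁻¹ ^ (∑ i, (x i).natAbs) ≤
      (P[|{a | 1 ≤ ω 0 a}]) {a | TT ω S 0 x a ≤ ENNReal.ofReal ((1 - ε) * μ (toR x))} := by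
    intro x
    obtain ⟨stp, hunit, hsum⟩ := exists_unit_steps_sum_eq x
    rw [Nat.cast_mul, Nat.cast_ofNat, ← one_div]
    refine pow_le_cond_of_steps_subset (ℓ := 1) (hωm 0) hindep
      (fun k hk => hstep 0 1 k (stp k) (hunit k hk)) hne ?_
    rintro a ⟨ha, hsteps⟩
    calc TT ω S 0 x a ≤ (∑ i, (x i).natAbs : ℕ) := by
          have h := TE_le_of_steps (ωe := fun z => ω z a) (Se := fun z ℓ k => S z ℓ k a)
            le_rfl ha (hS0 0 1 a) hsteps
          rwa [zero_add, hsum] at h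
      _ ≤ ENNReal.ofReal ((1 - ε) * μ (toR x)) := by
          rw [← ENNReal.ofReal_natCast]
          exact ENNReal.ofReal_le_ofReal
            (natAbs_sum_le_mul_of_inv_le_sInf hsub hhom (by linarith) hinf x)
  simpa using neg_log_le_liminf_inv_norm1_mul_log (by omega) hprob

/-- **Left tail lower bound (Section 1.2).**
Let `ε ∈ (0,1)` and suppose `inf_{‖y‖₁ = 1} μ(y) ≥ (1−ε)⁻¹`. Then
`liminf_{‖x‖₁ → ∞} ‖x‖₁^{-1} log ℙ(T(0,x) ≤ (1−ε) μ(x)) ≥ −log (2d)`. -/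
theorem frog_left_tail_lower_bound (d : ℕ) (hd : 2 ≤ d)
    {Ω : Type*} [MeasurableSpace Ω] (P : Measure Ω)
    (ω : Zd d → Ω → ℕ) (S : Zd d → ℕ → ℕ → Ω → Zd d)
    (hfrog : IsFrogModel d P ω S)
    (μ : (Fin d → ℝ) → ℝ) (hμ : IsTimeConstant P ω S μ)
    (ε : ℝ) (hε0 : 0 < ε) (hε1 : ε < 1)
    (hinf : (1 - ε)⁻¹ ≤ sInf {r : ℝ | ∃ y : Fin d → ℝ, norm1R y = 1 ∧ r = μ y}) :
    ((-Real.log (2 * d) : ℝ) : EReal) ≤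
      liminf
        (fun x : Zd d =>
          (((norm1 x)⁻¹ : ℝ) : EReal) *
            ENNReal.log
              ((P[|{a | 1 ≤ ω 0 a}])
                {a | TT ω S 0 x a ≤ ENNReal.ofReal ((1 - ε) * μ (toR x))}))
        (comap norm1 atTop) :=
  frog_left_tail_lower_bound_general d hd P ω S hfrog μ hμ ε hε1 hinf

end
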